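/- Let G be an X-generated group and let F be an X-generated F-inverse monoid such that there is a canonical morphism ν : G → F/σ (i.e., ν is a group morphism sending x_G to the σ-class of x_F for every x ∈ X). Then there is a canonical morphism φ : F(G) → F of F-inverse monoids (preserving ·, ⁻¹, m and 1, and sending (Γ_x, x_G) to x_F for every x ∈ X) such that the square commutes: for every (Γ,g) ∈ F(G), the σ-class of φ(Γ,g) in F/σ equals ν(g). -/

import Mathlib

/-! The morphism sends `(Γ, g)` to `E(Γ)·M(g)`, where `M(g)` is the maximum element of the
σ-class `ν g` and `E(Γ)` is the meet (product) of the idempotents `M(v)·M(v)⁻¹` over the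
vertices `v` of `Γ` and `M(u)·x_F·M(u·x_G)⁻¹` over its edges `(u, x)`. Conjugating `E(Γ)`
by `M(g)` gives `M(g)·M(g)⁻¹·E(g·Γ)`, and the defect between `M(g)·M(g')` and `M(g·g')` is
invisible below `E(g·Γ')` because `g` and `g·g'` are vertices of `g·Γ'`. -/

namespace FInvPaper

universe u v w

section Generic
variable {S : Type u}

/-- The natural partial order on an inverse monoid: `a ≤ b` iff `a = b·e` for some idempotent. -/
def nle [Mul S] (a b : S) : Prop := ∃ e : S, e * e = e ∧ a = b * e

/-- The minimum group congruence σ: `a σ b` iff `a·e = b·e` for some idempotent `e`. -/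
def sigma [Mul S] (a b : S) : Prop := ∃ e : S, e * e = e ∧ a * e = b * e

/-- `m` assigns to every element the maximum element of its σ-class. -/
def IsMaxOp [Mul S] (m : S → S) : Prop :=
  ∀ a : S, sigma (m a) a ∧ ∀ b : S, sigma b a → nle b (m a)

/-- A subset of `S` which is an entire σ-class. -/
def IsSigmaClass [Mul S] (A : Set S) : Prop := ∃ a : S, A = {b : S | sigma b a}

end Generic

/-- Inverse monoids: monoids with an involution satisfying `a·a⁻¹·a = a`, `(a·b)⁻¹ = b⁻¹·a⁻¹`,
in which all idempotents commute. -/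
class InverseMonoid (S : Type u) extends Monoid S, Inv S where
  inv_inv : ∀ a : S, a⁻¹⁻¹ = a
  mul_inv_rev : ∀ a b : S, (a * b)⁻¹ = b⁻¹ * a⁻¹
  mul_inv_self_mul : ∀ a : S, a * a⁻¹ * a = a
  idem_comm : ∀ e f : S, e * e = e → f * f = f → e * f = f * e

/-- F-inverse monoids in the enriched signature `(·, ⁻¹, ᵐ, 1)`. -/
class FInverseMonoid (S : Type u) extends InverseMonoid S where
  mx : S → S
  mx_isMaxOp : IsMaxOp mx

/-- The max-operation of an F-inverse monoid. -/
def mx {S : Type u} [FInverseMonoid S] : S → S := FInverseMonoid.mx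

section InverseMonoidLemmas

variable {S : Type u} [InverseMonoid S]

lemma mul_inv_idem (a : S) : (a * a⁻¹) * (a * a⁻¹) = a * a⁻¹ := by
  conv_lhs => rw [← mul_assoc, InverseMonoid.mul_inv_self_mul]

lemma inv_mul_self_mul (a : S) : a⁻¹ * a * a⁻¹ = a⁻¹ := by
  have h := InverseMonoid.mul_inv_self_mul (a := a⁻¹)
  rwa [InverseMonoid.inv_inv] at h

lemma inv_mul_idem (a : S) : (a⁻¹ * a) * (a⁻¹ * a) = a⁻¹ * a := by
  conv_lhs => rw [← mul_assoc, inv_mul_self_mul]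

lemma idem_inv {e : S} (he : e * e = e) : e⁻¹ = e := by
  have h1 : e⁻¹ * e⁻¹ = e⁻¹ := by rw [← InverseMonoid.mul_inv_rev, he]
  have hc : e * e⁻¹ = e⁻¹ * e := InverseMonoid.idem_comm e e⁻¹ he h1
  have h2 : e = e * e⁻¹ := by
    calc e = e * e⁻¹ * e := (InverseMonoid.mul_inv_self_mul e).symm
    _ = e * (e⁻¹ * e) := mul_assoc _ _ _
    _ = e * (e * e⁻¹) := by rw [hc]
    _ = e * e * e⁻¹ := (mul_assoc _ _ _).symm
    _ = e * e⁻¹ := by rw [he]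
  have h3 : e⁻¹ = e⁻¹ * e := by
    calc e⁻¹ = e⁻¹ * e * e⁻¹ := (inv_mul_self_mul e).symm
    _ = e⁻¹ * (e * e⁻¹) := mul_assoc _ _ _
    _ = e⁻¹ * (e⁻¹ * e) := by rw [hc]
    _ = e⁻¹ * e⁻¹ * e := (mul_assoc _ _ _).symm
    _ = e⁻¹ * e := by rw [h1]
  rw [h3, ← hc, ← h2]

lemma idem_mul_idem {e f : S} (he : e * e = e) (hf : f * f = f) :
    (e * f) * (e * f) = e * f := by
  calc (e * f) * (e * f) = e * (f * (e * f)) := mul_assoc _ _ _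
  _ = e * (f * e * f) := by rw [← mul_assoc f e f]
  _ = e * (e * f * f) := by rw [← InverseMonoid.idem_comm e f he hf]
  _ = e * (e * (f * f)) := by rw [mul_assoc e f f]
  _ = e * (e * f) := by rw [hf]
  _ = e * e * f := (mul_assoc _ _ _).symm
  _ = e * f := by rw [he]

lemma sigma_refl (a : S) : sigma a a := ⟨1, one_mul 1, rfl⟩

lemma sigma_symm {a b : S} (h : sigma a b) : sigma b a := by
  obtain ⟨e, he, hab⟩ := h
  exact ⟨e, he, hab.symm⟩

lemma sigma_trans {a b c : S} (h₁ : sigma a b) (h₂ : sigma b c) : sigma a c := by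
  obtain ⟨e, he, h1⟩ := h₁
  obtain ⟨f, hf, h2⟩ := h₂
  refine ⟨e * f, idem_mul_idem he hf, ?_⟩
  calc a * (e * f) = a * e * f := (mul_assoc _ _ _).symm
  _ = b * e * f := by rw [h1]
  _ = b * (e * f) := mul_assoc _ _ _
  _ = b * (f * e) := by rw [InverseMonoid.idem_comm e f he hf]
  _ = b * f * e := (mul_assoc _ _ _).symm
  _ = c * f * e := by rw [h2]
  _ = c * (f * e) := mul_assoc _ _ _
  _ = c * (e * f) := by rw [InverseMonoid.idem_comm e f he hf]

lemma sigma_mul_left {a b : S} (c : S) (h : sigma a b) : sigma (c * a) (c * b) := by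
  obtain ⟨e, he, hab⟩ := h
  exact ⟨e, he, by rw [mul_assoc, hab, ← mul_assoc]⟩

lemma inner_lemma {e : S} (he : e * e = e) (a : S) :
    a⁻¹ * (a * e * a⁻¹) = e * a⁻¹ := by
  calc a⁻¹ * (a * e * a⁻¹) = a⁻¹ * (a * e) * a⁻¹ := by rw [← mul_assoc a⁻¹ (a * e) a⁻¹]
  _ = a⁻¹ * a * e * a⁻¹ := by rw [← mul_assoc a⁻¹ a e]
  _ = e * (a⁻¹ * a) * a⁻¹ := by rw [InverseMonoid.idem_comm (a⁻¹ * a) e (inv_mul_idem a) he]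
  _ = e * (a⁻¹ * a * a⁻¹) := by rw [mul_assoc e (a⁻¹ * a) a⁻¹]
  _ = e * a⁻¹ := by rw [inv_mul_self_mul]

lemma sigma_inv {a b : S} (h : sigma a b) : sigma a⁻¹ b⁻¹ := by
  obtain ⟨e, he, hab⟩ := h
  have key5 : e * a⁻¹ = e * b⁻¹ := by
    have h' : (a * e)⁻¹ = (b * e)⁻¹ := by rw [hab]
    rwa [InverseMonoid.mul_inv_rev, InverseMonoid.mul_inv_rev, idem_inv he] at h'
  have key1 : (a * e * a⁻¹) * (a * e * a⁻¹) = a * e * a⁻¹ := by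
    calc (a * e * a⁻¹) * (a * e * a⁻¹) = a * e * (a⁻¹ * (a * e * a⁻¹)) := mul_assoc _ _ _
    _ = a * e * (e * a⁻¹) := by rw [inner_lemma he a]
    _ = a * e * e * a⁻¹ := (mul_assoc _ _ _).symm
    _ = a * (e * e) * a⁻¹ := by rw [mul_assoc a e e]
    _ = a * e * a⁻¹ := by rw [he]
  have key3 : a * e * a⁻¹ = b * e * b⁻¹ := by
    calc a * e * a⁻¹ = a * (e * e) * a⁻¹ := by rw [he]
    _ = a * e * e * a⁻¹ := by rw [← mul_assoc a e e]
    _ = a * e * (e * a⁻¹) := mul_assoc _ _ _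
    _ = a * e * (e * b⁻¹) := by rw [key5]
    _ = b * e * (e * b⁻¹) := by rw [hab]
    _ = b * e * e * b⁻¹ := (mul_assoc _ _ _).symm
    _ = b * (e * e) * b⁻¹ := by rw [mul_assoc b e e]
    _ = b * e * b⁻¹ := by rw [he]
  refine ⟨a * e * a⁻¹, key1, ?_⟩
  rw [inner_lemma he a, key5, key3, inner_lemma he b]

lemma sigma_mul_right {a b : S} (c : S) (h : sigma a b) : sigma (a * c) (b * c) := by
  have h1 := sigma_mul_left c⁻¹ (sigma_inv h)
  have h2 := sigma_inv h1
  rwa [InverseMonoid.mul_inv_rev c⁻¹ a⁻¹, InverseMonoid.mul_inv_rev c⁻¹ b⁻¹,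
    InverseMonoid.inv_inv, InverseMonoid.inv_inv, InverseMonoid.inv_inv] at h2

instance sigmaSetoid (S : Type u) [InverseMonoid S] : Setoid S where
  r := sigma
  iseqv := ⟨sigma_refl, sigma_symm, sigma_trans⟩

/-- The maximum group quotient `S/σ`. -/
def GQuot (S : Type u) [InverseMonoid S] : Type u := Quotient (sigmaSetoid S)

/-- The σ-class of an element, as an element of the maximum group quotient. -/
def σclass {S : Type u} [InverseMonoid S] (a : S) : GQuot S := Quotient.mk (sigmaSetoid S) a

instance (S : Type u) [InverseMonoid S] : Group (GQuot S) where
  mul := Quotient.map₂ (· * ·) (fun _ _ h₁ _ _ h₂ =>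
    sigma_trans (sigma_mul_right _ h₁) (sigma_mul_left _ h₂))
  one := σclass 1
  inv := Quotient.map (·⁻¹) (fun _ _ h => sigma_inv h)
  mul_assoc := by
    intro a b c
    induction a using Quotient.ind
    induction b using Quotient.ind
    induction c using Quotient.ind
    exact congrArg (Quotient.mk _) (mul_assoc _ _ _)
  one_mul := by
    intro a
    induction a using Quotient.ind
    exact congrArg (Quotient.mk _) (one_mul _)
  mul_one := by
    intro a
    induction a using Quotient.ind
    exact congrArg (Quotient.mk _) (mul_one _)
  inv_mul_cancel := by
    intro a
    induction a using Quotient.ind with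
    | _ a =>
      refine Quotient.sound ⟨a⁻¹ * a, inv_mul_idem a, ?_⟩
      rw [one_mul]
      exact inv_mul_idem a

end InverseMonoidLemmas


section Graphs

variable {G : Type u} [Group G] {X : Type v}

/-- A subgraph of the Cayley graph `Cay(G)` of the `X`-generated group `G` (with assignment
mapping `φ : X → G`), represented by its set of vertices and its set of positive edges:
the positive edge `(g, x)` goes from `g` to `g * φ x` and carries the label `x`; every
subgraph closed under edge inversion is uniquely determined by this data. -/
structure Subgraph (φ : X → G) : Type (max u v) where
  verts : Set G
  edges : Set (G × X)
  src_mem : ∀ e ∈ edges, Prod.fst e ∈ verts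
  tgt_mem : ∀ e ∈ edges, e.1 * φ e.2 ∈ verts

namespace Subgraph

variable {φ : X → G}

lemma ext' {Γ Δ : Subgraph φ} (hv : Γ.verts = Δ.verts) (he : Γ.edges = Δ.edges) : Γ = Δ := by
  cases Γ; cases Δ; cases hv; cases he; rfl

/-- Union of subgraphs. -/
def union (Γ Δ : Subgraph φ) : Subgraph φ where
  verts := Γ.verts ∪ Δ.verts
  edges := Γ.edges ∪ Δ.edges
  src_mem := by
    intro e he
    rcases he with h | h
    · exact Set.mem_union_left _ (Γ.src_mem e h)
    · exact Set.mem_union_right _ (Δ.src_mem e h)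
  tgt_mem := by
    intro e he
    rcases he with h | h
    · exact Set.mem_union_left _ (Γ.tgt_mem e h)
    · exact Set.mem_union_right _ (Δ.tgt_mem e h)

instance : Union (Subgraph φ) := ⟨union⟩

@[simp] lemma union_verts (Γ Δ : Subgraph φ) : (Γ ∪ Δ).verts = Γ.verts ∪ Δ.verts := rfl
@[simp] lemma union_edges (Γ Δ : Subgraph φ) : (Γ ∪ Δ).edges = Γ.edges ∪ Δ.edges := rfl

/-- Left translation of a subgraph by a group element. -/
def smul (g : G) (Γ : Subgraph φ) : Subgraph φ where
  verts := (g * ·) '' Γ.verts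
  edges := (fun e => (g * e.1, e.2)) '' Γ.edges
  src_mem := by
    rintro e ⟨e', he', rfl⟩
    exact ⟨e'.1, Γ.src_mem e' he', rfl⟩
  tgt_mem := by
    rintro e ⟨e', he', rfl⟩
    exact ⟨e'.1 * φ e'.2, Γ.tgt_mem e' he', (mul_assoc g e'.1 (φ e'.2)).symm⟩

instance : SMul G (Subgraph φ) := ⟨smul⟩

@[simp] lemma smul_verts (g : G) (Γ : Subgraph φ) : (g • Γ).verts = (g * ·) '' Γ.verts := rfl
@[simp] lemma smul_edges (g : G) (Γ : Subgraph φ) :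
    (g • Γ).edges = (fun e : G × X => (g * e.1, e.2)) '' Γ.edges := rfl

/-- The subgraph relation. -/
instance : HasSubset (Subgraph φ) := ⟨fun Γ Δ => Γ.verts ⊆ Δ.verts ∧ Γ.edges ⊆ Δ.edges⟩

lemma subset_iff (Γ Δ : Subgraph φ) : Γ ⊆ Δ ↔ Γ.verts ⊆ Δ.verts ∧ Γ.edges ⊆ Δ.edges := Iff.rfl

/-- Finiteness of a subgraph. -/
def IsFinite (Γ : Subgraph φ) : Prop := Γ.verts.Finite ∧ Γ.edges.Finite

/-- A subgraph has no isolated vertices if each of its vertices is an endpoint of one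
of its edges. -/
def NoIsolated (Γ : Subgraph φ) : Prop :=
  ∀ v ∈ Γ.verts, ∃ e ∈ Γ.edges, v = e.1 ∨ v = e.1 * φ e.2

/-- `Ed(Γ)`: the subgraph spanned by the edges of `Γ`, i.e. `Γ` with all isolated vertices
removed. -/
def ed (Γ : Subgraph φ) : Subgraph φ where
  verts := {v | ∃ e ∈ Γ.edges, v = e.1 ∨ v = e.1 * φ e.2}
  edges := Γ.edges
  src_mem := fun e he => ⟨e, he, Or.inl rfl⟩
  tgt_mem := fun e he => ⟨e, he, Or.inr rfl⟩

lemma ed_finite {Γ : Subgraph φ} (h : Γ.IsFinite) : Γ.ed.IsFinite := by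
  constructor
  · have hsub : Γ.ed.verts ⊆
        (fun e : G × X => e.1) '' Γ.edges ∪ (fun e : G × X => e.1 * φ e.2) '' Γ.edges := by
      rintro v ⟨e, he, rfl | rfl⟩
      · exact Set.mem_union_left _ ⟨e, he, rfl⟩
      · exact Set.mem_union_right _ ⟨e, he, rfl⟩
    exact ((h.2.image _).union (h.2.image _)).subset hsub
  · exact h.2

lemma ed_noIsolated (Γ : Subgraph φ) : Γ.ed.NoIsolated := fun _ hv => hv

end Subgraph

open Subgraph

variable {φ : X → G}

/-- The subgraph with the single vertex `g` and no edges. -/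
def vertexG (φ : X → G) (g : G) : Subgraph φ :=
  ⟨{g}, ∅, by simp, by simp⟩

/-- `Δ_g`: the edgeless subgraph with vertices `1` and `g`. -/
def deltaG (φ : X → G) (g : G) : Subgraph φ :=
  ⟨{1, g}, ∅, by simp, by simp⟩

/-- The subgraph spanned by a single (positive) edge. -/
def edgeG (φ : X → G) (e : G × X) : Subgraph φ where
  verts := {e.1, e.1 * φ e.2}
  edges := {e}
  src_mem := by
    intro e' he'
    rw [Set.mem_singleton_iff] at he'
    subst he'
    exact Set.mem_insert _ _
  tgt_mem := by
    intro e' he'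
    rw [Set.mem_singleton_iff] at he'
    subst he'
    exact Set.mem_insert_of_mem _ rfl

/-- The empty subgraph. -/
def emptyG (φ : X → G) : Subgraph φ := ⟨∅, ∅, by simp, by simp⟩

lemma edgeG_noIsolated (φ : X → G) (e : G × X) : (edgeG φ e).NoIsolated := by
  intro v hv
  refine ⟨e, Set.mem_singleton e, ?_⟩
  simpa [edgeG] using hv

/-- Two vertices are adjacent in `Γ` if they are connected by an edge of `Γ`. -/
def adj (Γ : Subgraph φ) (u v : G) : Prop :=
  ∃ e ∈ Γ.edges, (u = e.1 ∧ v = e.1 * φ e.2) ∨ (v = e.1 ∧ u = e.1 * φ e.2)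

/-- A subgraph is connected if any two of its vertices are joined by a path running in it. -/
def Connected (Γ : Subgraph φ) : Prop :=
  ∀ u ∈ Γ.verts, ∀ v ∈ Γ.verts, Relation.ReflTransGen (adj Γ) u v

lemma adj_mono {Γ Δ : Subgraph φ} (h : Γ.edges ⊆ Δ.edges) {u v : G} (ha : adj Γ u v) :
    adj Δ u v := by
  obtain ⟨e, he, hc⟩ := ha
  exact ⟨e, h he, hc⟩

lemma Connected.union {Γ Δ : Subgraph φ} (hΓ : Connected Γ) (hΔ : Connected Δ) (w : G)
    (hw₁ : w ∈ Γ.verts) (hw₂ : w ∈ Δ.verts) : Connected (Γ ∪ Δ) := by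
  have hsΓ : Γ.edges ⊆ (Γ ∪ Δ).edges := by
    rw [union_edges]; exact Set.subset_union_left
  have hsΔ : Δ.edges ⊆ (Γ ∪ Δ).edges := by
    rw [union_edges]; exact Set.subset_union_right
  have mΓ : ∀ {p q : G}, Relation.ReflTransGen (adj Γ) p q →
      Relation.ReflTransGen (adj (Γ ∪ Δ)) p q :=
    fun h => Relation.ReflTransGen.mono (fun _ _ h' => adj_mono hsΓ h') _ _ h
  have mΔ : ∀ {p q : G}, Relation.ReflTransGen (adj Δ) p q →
      Relation.ReflTransGen (adj (Γ ∪ Δ)) p q :=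
    fun h => Relation.ReflTransGen.mono (fun _ _ h' => adj_mono hsΔ h') _ _ h
  intro u hu v hv
  rw [union_verts] at hu hv
  rcases hu with hu | hu <;> rcases hv with hv | hv
  · exact mΓ (hΓ u hu v hv)
  · exact (mΓ (hΓ u hu w hw₁)).trans (mΔ (hΔ w hw₂ v hv))
  · exact (mΔ (hΔ u hu w hw₂)).trans (mΓ (hΓ w hw₁ v hv))
  · exact mΔ (hΔ u hu v hv)

lemma Connected.smul {Γ : Subgraph φ} (g : G) (h : Connected Γ) : Connected (g • Γ) := by
  intro u hu v hv
  rw [smul_verts] at hu hv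
  obtain ⟨u', hu', rfl⟩ := hu
  obtain ⟨v', hv', rfl⟩ := hv
  refine Relation.ReflTransGen.lift (fun z => g * z) ?_ _ _ (h u' hu' v' hv')
  rintro p q ⟨e, he, hc⟩
  show adj (g • Γ) (g * p) (g * q)
  refine ⟨(g * e.1, e.2), ?_, ?_⟩
  · rw [smul_edges]; exact ⟨e, he, rfl⟩
  · rcases hc with ⟨rfl, rfl⟩ | ⟨rfl, rfl⟩
    · exact Or.inl ⟨rfl, (mul_assoc _ _ _).symm⟩
    · exact Or.inr ⟨rfl, (mul_assoc _ _ _).symm⟩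

lemma Subgraph.NoIsolated.union {Γ Δ : Subgraph φ} (hΓ : Γ.NoIsolated) (hΔ : Δ.NoIsolated) :
    (Γ ∪ Δ).NoIsolated := by
  intro v hv
  rw [union_verts] at hv
  rcases hv with hv | hv
  · obtain ⟨e, he, hor⟩ := hΓ v hv
    exact ⟨e, by rw [union_edges]; exact Set.mem_union_left _ he, hor⟩
  · obtain ⟨e, he, hor⟩ := hΔ v hv
    exact ⟨e, by rw [union_edges]; exact Set.mem_union_right _ he, hor⟩

lemma Subgraph.NoIsolated.smul {Γ : Subgraph φ} (g : G) (h : Γ.NoIsolated) :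
    (g • Γ).NoIsolated := by
  intro v hv
  rw [smul_verts] at hv
  obtain ⟨u, hu, rfl⟩ := hv
  obtain ⟨e, he, hor⟩ := h u hu
  refine ⟨(g * e.1, e.2), by rw [smul_edges]; exact ⟨e, he, rfl⟩, ?_⟩
  rcases hor with rfl | rfl
  · exact Or.inl rfl
  · exact Or.inr (mul_assoc _ _ _).symm

end Graphs


section Expansions

variable {G : Type u} [Group G] {X : Type v} {φ : X → G}

open Subgraph

/-- `F(G)`: pairs `(Γ, g)` where `Γ` is a finite subgraph of `Cay(G)` having `1` and `g`
among its vertices. -/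
structure FExp (φ : X → G) : Type (max u v) where
  graph : Subgraph φ
  elt : G
  finite : graph.IsFinite
  one_mem : (1 : G) ∈ graph.verts
  elt_mem : elt ∈ graph.verts

namespace FExp

lemma ext' {a b : FExp φ} (hg : a.graph = b.graph) (he : a.elt = b.elt) : a = b := by
  cases a; cases b; cases hg; cases he; rfl

instance : Mul (FExp φ) :=
  ⟨fun a b =>
    { graph := a.graph ∪ a.elt • b.graph
      elt := a.elt * b.elt
      finite := ⟨by
          rw [union_verts, smul_verts]
          exact a.finite.1.union (b.finite.1.image _),
        by
          rw [union_edges, smul_edges]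
          exact a.finite.2.union (b.finite.2.image _)⟩
      one_mem := by
        rw [union_verts]
        exact Set.mem_union_left _ a.one_mem
      elt_mem := by
        rw [union_verts]
        refine Set.mem_union_right _ ?_
        rw [smul_verts]
        exact ⟨b.elt, b.elt_mem, rfl⟩ }⟩

@[simp] lemma mul_graph (a b : FExp φ) : (a * b).graph = a.graph ∪ a.elt • b.graph := rfl
@[simp] lemma mul_elt (a b : FExp φ) : (a * b).elt = a.elt * b.elt := rfl

instance : One (FExp φ) :=
  ⟨{ graph := deltaG φ 1
     elt := 1
     finite := ⟨(Set.finite_singleton (1 : G)).insert 1, Set.finite_empty⟩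
     one_mem := Set.mem_insert 1 _
     elt_mem := Set.mem_insert 1 _ }⟩

@[simp] lemma one_graph : (1 : FExp φ).graph = deltaG φ 1 := rfl
@[simp] lemma one_elt : (1 : FExp φ).elt = 1 := rfl

instance : Inv (FExp φ) :=
  ⟨fun a =>
    { graph := a.elt⁻¹ • a.graph
      elt := a.elt⁻¹
      finite := ⟨by rw [smul_verts]; exact a.finite.1.image _,
        by rw [smul_edges]; exact a.finite.2.image _⟩
      one_mem := by
        rw [smul_verts]
        exact ⟨a.elt, a.elt_mem, inv_mul_cancel a.elt⟩
      elt_mem := by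
        rw [smul_verts]
        exact ⟨1, a.one_mem, mul_one _⟩ }⟩

@[simp] lemma inv_graph (a : FExp φ) : (a⁻¹).graph = a.elt⁻¹ • a.graph := rfl
@[simp] lemma inv_elt (a : FExp φ) : (a⁻¹).elt = a.elt⁻¹ := rfl

end FExp

/-- The element `(Δ_g, g)` of `F(G)`. -/
def maxElt (φ : X → G) (g : G) : FExp φ where
  graph := deltaG φ g
  elt := g
  finite := ⟨(Set.finite_singleton g).insert 1, Set.finite_empty⟩
  one_mem := Set.mem_insert 1 _
  elt_mem := Set.mem_insert_of_mem _ rfl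

/-- The max-operation `(Γ, g) ↦ (Δ_g, g)` on `F(G)`. -/
def mxOp (a : FExp φ) : FExp φ := maxElt φ a.elt

/-- The generator `(Γ_x, x_G)` of `F(G)`. -/
def genElt (φ : X → G) (x : X) : FExp φ where
  graph := edgeG φ (1, x)
  elt := φ x
  finite := ⟨(Set.finite_singleton _).insert _, Set.finite_singleton _⟩
  one_mem := Set.mem_insert 1 _
  elt_mem := by simp [edgeG]

/-- `M(G)`: the Margolis–Meakin expansion; pairs `(Γ, g)` where `Γ` is a finite *connected*
subgraph of `Cay(G)` having `1` and `g` among its vertices. -/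
structure MExp (φ : X → G) : Type (max u v) where
  graph : Subgraph φ
  elt : G
  finite : graph.IsFinite
  connected : Connected graph
  one_mem : (1 : G) ∈ graph.verts
  elt_mem : elt ∈ graph.verts

namespace MExp

instance : Mul (MExp φ) :=
  ⟨fun a b =>
    { graph := a.graph ∪ a.elt • b.graph
      elt := a.elt * b.elt
      finite := ⟨by
          rw [union_verts, smul_verts]
          exact a.finite.1.union (b.finite.1.image _),
        by
          rw [union_edges, smul_edges]
          exact a.finite.2.union (b.finite.2.image _)⟩
      connected := by
        refine Connected.union a.connected (Connected.smul a.elt b.connected) a.elt a.elt_mem ?_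
        rw [smul_verts]
        exact ⟨1, b.one_mem, mul_one _⟩
      one_mem := by
        rw [union_verts]
        exact Set.mem_union_left _ a.one_mem
      elt_mem := by
        rw [union_verts]
        refine Set.mem_union_right _ ?_
        rw [smul_verts]
        exact ⟨b.elt, b.elt_mem, rfl⟩ }⟩

end MExp

/-- `P(G)`: pairs `(Γ, g)` where `Γ` is a finite subgraph of `Cay(G)` without isolated
vertices and `g ∈ G` (a model of the semidirect product of the semilattice of such
subgraphs by `G`). -/
structure PExp (φ : X → G) : Type (max u v) where
  graph : Subgraph φ
  elt : G
  finite : graph.IsFinite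
  noIsolated : graph.NoIsolated

namespace PExp

lemma ext' {a b : PExp φ} (hg : a.graph = b.graph) (he : a.elt = b.elt) : a = b := by
  cases a; cases b; cases hg; cases he; rfl

instance : Mul (PExp φ) :=
  ⟨fun a b =>
    { graph := a.graph ∪ a.elt • b.graph
      elt := a.elt * b.elt
      finite := ⟨by
          rw [union_verts, smul_verts]
          exact a.finite.1.union (b.finite.1.image _),
        by
          rw [union_edges, smul_edges]
          exact a.finite.2.union (b.finite.2.image _)⟩
      noIsolated := a.noIsolated.union (b.noIsolated.smul a.elt) }⟩

@[simp] lemma mul_graph (a b : PExp φ) : (a * b).graph = a.graph ∪ a.elt • b.graph := rfl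
@[simp] lemma mul_elt (a b : PExp φ) : (a * b).elt = a.elt * b.elt := rfl

instance : One (PExp φ) :=
  ⟨{ graph := emptyG φ
     elt := 1
     finite := ⟨Set.finite_empty, Set.finite_empty⟩
     noIsolated := by intro v hv; simp [emptyG] at hv }⟩

@[simp] lemma one_graph : (1 : PExp φ).graph = emptyG φ := rfl
@[simp] lemma one_elt : (1 : PExp φ).elt = 1 := rfl

instance : Inv (PExp φ) :=
  ⟨fun a =>
    { graph := a.elt⁻¹ • a.graph
      elt := a.elt⁻¹
      finite := ⟨by rw [smul_verts]; exact a.finite.1.image _,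
        by rw [smul_edges]; exact a.finite.2.image _⟩
      noIsolated := a.noIsolated.smul _ }⟩

@[simp] lemma inv_graph (a : PExp φ) : (a⁻¹).graph = a.elt⁻¹ • a.graph := rfl
@[simp] lemma inv_elt (a : PExp φ) : (a⁻¹).elt = a.elt⁻¹ := rfl

end PExp

/-- The max-operation `(Γ, g) ↦ (∅, g)` on `P(G)`. -/
def pMax (a : PExp φ) : PExp φ where
  graph := emptyG φ
  elt := a.elt
  finite := ⟨Set.finite_empty, Set.finite_empty⟩
  noIsolated := by intro v hv; simp [emptyG] at hv

/-- The generator `(Γ_x, x_G)` of `P(G)`. -/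
def genEltP (φ : X → G) (x : X) : PExp φ where
  graph := edgeG φ (1, x)
  elt := φ x
  finite := ⟨(Set.finite_singleton _).insert _, Set.finite_singleton _⟩
  noIsolated := edgeG_noIsolated φ (1, x)

/-- The canonical map `F(G) → P(G)`, `(Γ, g) ↦ (Ed(Γ), g)`. -/
def edMap (a : FExp φ) : PExp φ where
  graph := a.graph.ed
  elt := a.elt
  finite := ed_finite a.finite
  noIsolated := a.graph.ed_noIsolated

/-- The relation `θ` on `F(G)`: `(Γ,g) θ (Ξ,h)` iff `g = h` and `Ed(Γ) = Ed(Ξ)`. -/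
def thetaRel (φ : X → G) (a b : FExp φ) : Prop := a.elt = b.elt ∧ a.graph.ed = b.graph.ed

end Expansions

section Terms

variable {X : Type v}

/-- Terms of the term algebra `I^m_X` in their (unique) normal form
`u₀ · m(v₁) · u₁ ⋯ u_{n-1} · m(vₙ) · uₙ` with `uᵢ, vⱼ` words in the free monoid with
involution `I_X` on `X` (represented as lists over `X ⊕ X`, where `inl x` stands for `x`
and `inr x` for `x⁻¹`): the first component is `u₀`, and the second lists the pairs
`(vᵢ, uᵢ)`. -/
abbrev MTerm (X : Type v) := List (X ⊕ X) × List (List (X ⊕ X) × List (X ⊕ X))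

/-- Value of a letter of `X ⊔ X⁻¹`. -/
def letterVal {M : Type w} [Monoid M] [Inv M] (f : X → M) : X ⊕ X → M
  | Sum.inl x => f x
  | Sum.inr x => (f x)⁻¹

/-- Value of a word of `I_X`. -/
def wordVal {M : Type w} [Monoid M] [Inv M] (f : X → M) (u : List (X ⊕ X)) : M :=
  (u.map (letterVal f)).prod

/-- Value `[t]` of a term `t ∈ I^m_X` under the assignment `f` of the generators,
where `mop` is interpreted as the operation `m`. -/
def termVal {M : Type w} [Monoid M] [Inv M] (f : X → M) (mop : M → M) (t : MTerm X) : M :=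
  wordVal f t.1 * (t.2.map (fun p => mop (wordVal f p.1) * wordVal f p.2)).prod

end Terms

section Journeys

variable {G : Type u} [Group G] {X : Type v}

/-- The subgraph of `Cay(G)` spanned by the path starting at `g` with label the given word;
for the empty word it is the single vertex `g`. -/
def pathGraph (φ : X → G) : G → List (X ⊕ X) → Subgraph φ
  | g, [] => vertexG φ g
  | g, Sum.inl x :: u => edgeG φ (g, x) ∪ pathGraph φ (g * φ x) u
  | g, Sum.inr x :: u => edgeG φ (g * (φ x)⁻¹, x) ∪ pathGraph φ (g * (φ x)⁻¹) u

/-- The subgraph of `Cay(G)` spanned by the journey `j_g(w)` induced by the term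
`w = u₀ · m(v₁) · u₁ ⋯ · m(vₙ) · uₙ` starting at `g`: traverse the path labelled `u₀`
from `g`, jump to `g·[u₀v₁]`, traverse the path labelled `u₁`, and so on. -/
def journeyGraph (φ : X → G) : G → List (X ⊕ X) → List (List (X ⊕ X) × List (X ⊕ X)) →
    Subgraph φ
  | g, u, [] => pathGraph φ g u
  | g, u, (v, u') :: rest =>
      pathGraph φ g u ∪ journeyGraph φ (g * wordVal φ u * wordVal φ v) u' rest

end Journeys

section NaturalOrder

variable {S : Type u} [InverseMonoid S]

lemma nle_refl (a : S) : nle a a := ⟨1, one_mul 1, (mul_one a).symm⟩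

lemma nle_trans {a b c : S} (h₁ : nle a b) (h₂ : nle b c) : nle a c := by
  obtain ⟨e, he, rfl⟩ := h₁
  obtain ⟨d, hd, rfl⟩ := h₂
  exact ⟨d * e, idem_mul_idem hd he, mul_assoc _ _ _⟩

lemma nle_antisymm {a b : S} (h₁ : nle a b) (h₂ : nle b a) : a = b := by
  obtain ⟨e, he, hab⟩ := h₁
  obtain ⟨d, hd, hba⟩ := h₂
  have hbd : b * d = b := by rw [hba, mul_assoc, hd]
  rw [hba, hab, mul_assoc, InverseMonoid.idem_comm e d he hd, ← mul_assoc, hbd]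

lemma nle_mul_idem (a : S) {e : S} (he : e * e = e) : nle (a * e) a := ⟨e, he, rfl⟩

lemma idem_conj {e : S} (he : e * e = e) (a : S) :
    (a * e * a⁻¹) * (a * e * a⁻¹) = a * e * a⁻¹ := by
  rw [mul_assoc (a * e), inner_lemma he a, ← mul_assoc, mul_assoc a e e, he]

lemma idem_mul_eq_mul_conj {e : S} (he : e * e = e) (c : S) : e * c = c * (c⁻¹ * e * c) := by
  rw [← mul_assoc, ← mul_assoc, InverseMonoid.idem_comm _ e (mul_inv_idem c) he, mul_assoc e,
    InverseMonoid.mul_inv_self_mul]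

lemma nle_mul_left {a b : S} (c : S) (h : nle a b) : nle (c * a) (c * b) := by
  obtain ⟨e, he, rfl⟩ := h
  exact ⟨e, he, (mul_assoc _ _ _).symm⟩

lemma nle_mul_right {a b : S} (c : S) (h : nle a b) : nle (a * c) (b * c) := by
  obtain ⟨e, he, rfl⟩ := h
  have hc := idem_conj he c⁻¹
  rw [InverseMonoid.inv_inv] at hc
  exact ⟨c⁻¹ * e * c, hc, by rw [mul_assoc, idem_mul_eq_mul_conj he, ← mul_assoc]⟩

lemma nle_mul {a b c d : S} (h₁ : nle a b) (h₂ : nle c d) : nle (a * c) (b * d) :=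
  nle_trans (nle_mul_right c h₁) (nle_mul_left b h₂)

lemma nle_inv {a b : S} (h : nle a b) : nle a⁻¹ b⁻¹ := by
  obtain ⟨e, he, rfl⟩ := h
  refine ⟨b * e * b⁻¹, idem_conj he b, ?_⟩
  rw [InverseMonoid.mul_inv_rev, idem_inv he, inner_lemma he b]

lemma idem_mul_inv_of_nle {a b : S} (h : nle a b) : (a * b⁻¹) * (a * b⁻¹) = a * b⁻¹ := by
  obtain ⟨e, he, rfl⟩ := h
  exact idem_conj he b

lemma mul_inv_mul_of_nle {a b : S} (h : nle a b) : a * b⁻¹ * b = a := by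
  obtain ⟨e, he, rfl⟩ := h
  rw [mul_assoc (b * e), mul_assoc b, InverseMonoid.idem_comm e _ he (inv_mul_idem b),
    ← mul_assoc, ← mul_assoc, InverseMonoid.mul_inv_self_mul]

end NaturalOrder

section Idempotents

variable {S : Type u} [InverseMonoid S]

/-- The idempotents of an inverse monoid, ordered as a meet-semilattice with `e ⊓ f = e·f`. -/
@[ext]
structure Idem (S : Type u) [InverseMonoid S] : Type u where
  val : S
  idem : val * val = val

namespace Idem

instance : Min (Idem S) := ⟨fun e f => ⟨e.val * f.val, idem_mul_idem e.idem f.idem⟩⟩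

instance : SemilatticeInf (Idem S) :=
  SemilatticeInf.mk' (fun e f => Idem.ext (InverseMonoid.idem_comm _ _ e.idem f.idem))
    (fun _ _ _ => Idem.ext (mul_assoc _ _ _)) (fun e => Idem.ext e.idem)

instance : OrderTop (Idem S) where
  top := ⟨1, one_mul 1⟩
  le_top e := Idem.ext (one_mul e.val)

@[simp] lemma val_inf (e f : Idem S) : (e ⊓ f).val = e.val * f.val := rfl

@[simp] lemma val_top : (⊤ : Idem S).val = 1 := rfl

lemma mul_eq_left_of_le {e f : Idem S} (h : e ≤ f) : e.val * f.val = e.val :=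
  congrArg Idem.val (inf_eq_left.mpr h)

lemma le_of_nle {e f : Idem S} (h : nle e.val f.val) : e ≤ f := by
  obtain ⟨d, hd, hef⟩ := h
  refine inf_eq_left.mp (Idem.ext ?_)
  rw [val_inf, hef, mul_assoc, InverseMonoid.idem_comm d f.val hd f.idem, ← mul_assoc, f.idem]

def ofLE {a b : S} (h : nle a b) : Idem S := ⟨a * b⁻¹, idem_mul_inv_of_nle h⟩

def range (a : S) : Idem S := ofLE (nle_refl a)

def conj (a : S) (e : Idem S) : Idem S := ofLE (nle_mul_idem a e.idem)

lemma ofLE_mul {a b : S} (h : nle a b) : (ofLE h).val * b = a := mul_inv_mul_of_nle h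

lemma ofLE_mono {a b a' b' : S} {h : nle a b} {h' : nle a' b'} (ha : nle a a') (hb : nle b b') :
    ofLE h ≤ ofLE h' :=
  le_of_nle (nle_mul ha (nle_inv hb))

lemma ofLE_le_range {a b : S} (h : nle a b) : ofLE h ≤ range b := by
  refine inf_eq_left.mp (Idem.ext ?_)
  show a * b⁻¹ * (b * b⁻¹) = a * b⁻¹
  rw [mul_assoc a, ← mul_assoc b⁻¹, inv_mul_self_mul]

lemma range_eq_ofLE {a b : S} (h : nle a b) : range a = ofLE h := by
  obtain ⟨e, he, rfl⟩ := h
  refine Idem.ext ?_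
  show b * e * (b * e)⁻¹ = b * e * b⁻¹
  rw [InverseMonoid.mul_inv_rev, idem_inv he, ← mul_assoc, mul_assoc b e e, he]

lemma mul_eq_mul_of_le_range {a b : S} (h : nle a b) {e : Idem S} (he : e ≤ range a) :
    e.val * a = e.val * b := by
  rw [range_eq_ofLE h] at he
  calc e.val * a = e.val * ((ofLE h).val * b) := by rw [ofLE_mul]
  _ = e.val * b := by rw [← mul_assoc, mul_eq_left_of_le he]

lemma range_one : range (1 : S) = ⊤ :=
  Idem.ext (by simp only [range, ofLE, val_top, idem_inv (one_mul (1 : S)), mul_one])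

lemma conj_le_range (a : S) (e : Idem S) : conj a e ≤ range a := ofLE_le_range _

lemma conj_ofLE (c : S) {a b : S} (h : nle a b) :
    conj c (ofLE h) = ofLE (nle_mul_left c h) := by
  refine Idem.ext ?_
  show c * (a * b⁻¹) * c⁻¹ = c * a * (c * b)⁻¹
  rw [InverseMonoid.mul_inv_rev]
  simp only [mul_assoc]

lemma conj_range (c a : S) : conj c (range a) = range (c * a) := conj_ofLE c _

lemma conj_top (a : S) : conj a ⊤ = range a := Idem.ext (by simp [conj, range, ofLE])

lemma conj_inf (a : S) (e f : Idem S) : conj a (e ⊓ f) = conj a e ⊓ conj a f := by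
  refine Idem.ext ?_
  show a * (e.val * f.val) * a⁻¹ = a * e.val * a⁻¹ * (a * f.val * a⁻¹)
  rw [mul_assoc (a * e.val) a⁻¹, inner_lemma f.idem]
  simp only [mul_assoc]

lemma conj_mono (a : S) {e f : Idem S} (h : e ≤ f) : conj a e ≤ conj a f := by
  rw [← inf_eq_left.mpr h, conj_inf]
  exact inf_le_right

lemma range_inf_eq_conj (a : S) (e : Idem S) : range a ⊓ e = conj a (conj a⁻¹ e) := by
  refine Idem.ext ?_
  show a * a⁻¹ * e.val = a * (a⁻¹ * e.val * a⁻¹⁻¹) * a⁻¹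
  have hsw : a * a⁻¹ * e.val * (a * a⁻¹) = a * a⁻¹ * e.val := by
    rw [mul_assoc, InverseMonoid.idem_comm e.val _ e.idem (mul_inv_idem a), ← mul_assoc,
      mul_inv_idem]
  rw [InverseMonoid.inv_inv, ← hsw]
  simp only [mul_assoc]

lemma mul_eq_conj_mul (a : S) (e : Idem S) : a * e.val = (conj a e).val * a :=
  (ofLE_mul (nle_mul_idem a e.idem)).symm

lemma conj_finset_inf {ι : Type*} (a : S) {E E' : ι → Idem S}
    (h : ∀ i, conj a (E i) = range a ⊓ E' i) (s : Finset ι) :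
    conj a (s.inf E) = range a ⊓ s.inf E' := by
  induction s using Finset.cons_induction with
  | empty => rw [Finset.inf_empty, Finset.inf_empty, conj_top, inf_top_eq]
  | cons i s hi ih =>
    rw [Finset.inf_cons, Finset.inf_cons, conj_inf, h, ih, ← inf_inf_distrib_left]

end Idem

end Idempotents

section MaxOperation

variable {F : Type w} [FInverseMonoid F]

lemma mx_sigma (a : F) : sigma (mx a) a := (FInverseMonoid.mx_isMaxOp a).1

lemma nle_mx {a b : F} (h : sigma b a) : nle b (mx a) := (FInverseMonoid.mx_isMaxOp a).2 b h

lemma mx_eq_of_sigma {a b : F} (h : sigma a b) : mx a = mx b :=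
  nle_antisymm (nle_mx (sigma_trans (mx_sigma a) h))
    (nle_mx (sigma_trans (mx_sigma b) (sigma_symm h)))

lemma eq_one_of_one_nle {a : F} (h : nle 1 a) : a = 1 := by
  obtain ⟨e, he, h1⟩ := h
  have he1 : e = 1 := by
    calc e = a * e * e := by rw [← h1, one_mul]
    _ = 1 := by rw [mul_assoc, he, ← h1]
  calc a = a * e := by rw [he1, mul_one]
  _ = 1 := h1.symm

lemma mx_one : mx (1 : F) = 1 := eq_one_of_one_nle (nle_mx (sigma_refl 1))

def maxOfClass : GQuot F → F := Quotient.lift mx fun _ _ h => mx_eq_of_sigma h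

lemma mx_eq_maxOfClass (a : F) : mx a = maxOfClass (σclass a) := rfl

lemma σclass_maxOfClass (q : GQuot F) : σclass (maxOfClass q) = q := by
  obtain ⟨a, rfl⟩ := Quotient.exists_rep q
  exact Quotient.sound (mx_sigma a)

lemma nle_maxOfClass {a : F} {q : GQuot F} (h : σclass a = q) : nle a (maxOfClass q) := by
  obtain ⟨b, rfl⟩ := Quotient.exists_rep q
  exact nle_mx (Quotient.exact h)

lemma σclass_mul (a b : F) : σclass (a * b) = σclass a * σclass b := rfl

lemma σclass_inv (a : F) : σclass a⁻¹ = (σclass a)⁻¹ := rfl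

lemma σclass_idem_mul (e : Idem F) (a : F) : σclass (e.val * a) = σclass a := by
  have h := sigma_mul_right a ⟨e.val, e.idem, e.idem.trans (one_mul _).symm⟩
  rw [one_mul] at h
  exact Quotient.sound h

end MaxOperation

section MaxRepresentative

variable {G : Type u} [Group G] {F : Type w} [FInverseMonoid F] (ν : G →* GQuot F)

def maxRep (g : G) : F := maxOfClass (ν g)

lemma σclass_maxRep (g : G) : σclass (maxRep ν g) = ν g := σclass_maxOfClass (ν g)

lemma nle_maxRep {a : F} {g : G} (h : σclass a = ν g) : nle a (maxRep ν g) := nle_maxOfClass h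

lemma maxRep_one : maxRep ν 1 = 1 := by
  rw [maxRep, map_one]
  exact mx_one

lemma maxRep_mul_nle {g h k : G} (hk : g * h = k) : nle (maxRep ν g * maxRep ν h) (maxRep ν k) :=
  nle_maxRep ν (by rw [σclass_mul, σclass_maxRep, σclass_maxRep, ← map_mul, hk])

lemma maxRep_inv (g : G) : maxRep ν g⁻¹ = (maxRep ν g)⁻¹ := by
  have key : ∀ k : G, nle (maxRep ν k)⁻¹ (maxRep ν k⁻¹) := fun k =>
    nle_maxRep ν (by rw [σclass_inv, σclass_maxRep, map_inv])
  have h := nle_inv (key g⁻¹)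
  rw [inv_inv, InverseMonoid.inv_inv] at h
  exact nle_antisymm h (key g)

lemma mx_idem_mul_maxRep (e : Idem F) (g : G) : mx (e.val * maxRep ν g) = maxRep ν g := by
  rw [mx_eq_maxOfClass, σclass_idem_mul, σclass_maxRep, maxRep]

variable {ν} {c : F} {w : G}

lemma maxRep_mul_nle_maxRep_mul (hc : σclass c = ν w) (u : G) :
    nle (maxRep ν u * c) (maxRep ν (u * w)) :=
  nle_maxRep ν (by rw [σclass_mul, σclass_maxRep, hc, map_mul])

/-- The common shape `M(u)·c·M(u·w)⁻¹`, for `c` in the σ-class `ν w`, of the vertex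
(`c = 1`) and edge (`c = x_F`) idempotents. -/
def cellIdem (hc : σclass c = ν w) (u : G) : Idem F :=
  Idem.ofLE (maxRep_mul_nle_maxRep_mul hc u)

lemma cellIdem_mul (hc : σclass c = ν w) (u : G) :
    (cellIdem hc u).val * maxRep ν (u * w) = maxRep ν u * c :=
  Idem.ofLE_mul _

lemma conj_cellIdem (hc : σclass c = ν w) (t u : G) :
    Idem.conj (maxRep ν t) (cellIdem hc u) = Idem.range (maxRep ν t) ⊓ cellIdem hc (t * u) := by
  apply le_antisymm
  · refine le_inf (Idem.conj_le_range _ _) ?_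
    rw [cellIdem, Idem.conj_ofLE]
    refine Idem.ofLE_mono ?_ (maxRep_mul_nle ν (mul_assoc t u w).symm)
    rw [← mul_assoc]
    exact nle_mul_right c (maxRep_mul_nle ν rfl)
  · rw [Idem.range_inf_eq_conj]
    refine Idem.conj_mono _ ?_
    rw [cellIdem, Idem.conj_ofLE, ← maxRep_inv]
    refine Idem.ofLE_mono ?_ (maxRep_mul_nle ν (by group))
    rw [← mul_assoc]
    exact nle_mul_right c (maxRep_mul_nle ν (by group))

variable (ν) in
lemma cellIdem_one (u : G) :
    cellIdem (c := 1) (w := 1) (map_one ν).symm u = Idem.range (maxRep ν u) :=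
  Idem.ext (by simp only [cellIdem, Idem.ofLE, Idem.range, mul_one])

variable (ν) in
lemma range_maxRep_mul (t u : G) :
    Idem.range (maxRep ν t * maxRep ν u)
      = Idem.range (maxRep ν t) ⊓ Idem.range (maxRep ν (t * u)) := by
  rw [← Idem.conj_range, ← cellIdem_one ν u, conj_cellIdem, cellIdem_one]

end MaxRepresentative

section Weight

variable {G : Type u} [Group G] {X : Type v} {F : Type w} [FInverseMonoid F]
  (ν : G →* GQuot F) (f : X → F) {φ : X → G} (hν : ∀ x : X, ν (φ x) = σclass (f x))

def edgeIdem (e : G × X) : Idem F := cellIdem (hν e.2).symm e.1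

lemma conj_edgeIdem (g : G) (e : G × X) :
    Idem.conj (maxRep ν g) (edgeIdem ν f hν e)
      = Idem.range (maxRep ν g) ⊓ edgeIdem ν f hν (g * e.1, e.2) :=
  conj_cellIdem _ g e.1

namespace Subgraph

lemma IsFinite.smul {Γ : Subgraph φ} (h : Γ.IsFinite) (g : G) : (g • Γ).IsFinite :=
  ⟨h.1.image _, h.2.image _⟩

noncomputable def weight (Γ : Subgraph φ) (hΓ : Γ.IsFinite) : Idem F :=
  hΓ.1.toFinset.inf (fun v => Idem.range (maxRep ν v)) ⊓ hΓ.2.toFinset.inf (edgeIdem ν f hν)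

lemma weight_le_range {Γ : Subgraph φ} (hΓ : Γ.IsFinite) {v : G} (hv : v ∈ Γ.verts) :
    Γ.weight ν f hν hΓ ≤ Idem.range (maxRep ν v) :=
  inf_le_left.trans (Finset.inf_le (hΓ.1.mem_toFinset.mpr hv))

lemma weight_union {Γ Δ : Subgraph φ} (hΓ : Γ.IsFinite) (hΔ : Δ.IsFinite)
    (h : (Γ ∪ Δ).IsFinite) :
    (Γ ∪ Δ).weight ν f hν h = Γ.weight ν f hν hΓ ⊓ Δ.weight ν f hν hΔ := by
  classical
  have hV : h.1.toFinset = hΓ.1.toFinset ∪ hΔ.1.toFinset := Set.Finite.toFinset_union _ _ _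
  have hE : h.2.toFinset = hΓ.2.toFinset ∪ hΔ.2.toFinset := Set.Finite.toFinset_union _ _ _
  rw [weight, weight, weight, hV, hE, Finset.inf_union, Finset.inf_union, inf_inf_inf_comm]

lemma conj_weight (g : G) {Γ : Subgraph φ} (hΓ : Γ.IsFinite) (h : (g • Γ).IsFinite) :
    Idem.conj (maxRep ν g) (Γ.weight ν f hν hΓ)
      = Idem.range (maxRep ν g) ⊓ (g • Γ).weight ν f hν h := by
  classical
  have hV : h.1.toFinset = hΓ.1.toFinset.image (g * ·) := Set.Finite.toFinset_image _ _ _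
  have hE : h.2.toFinset = hΓ.2.toFinset.image (fun e : G × X => (g * e.1, e.2)) :=
    Set.Finite.toFinset_image _ _ _
  rw [weight, weight, hV, hE, Finset.inf_image, Finset.inf_image, Idem.conj_inf,
    Idem.conj_finset_inf _ (fun v => by rw [Idem.conj_range, range_maxRep_mul]),
    Idem.conj_finset_inf _ (conj_edgeIdem ν f hν g), ← inf_inf_distrib_left]
  rfl

lemma weight_deltaG (g : G) (h : (deltaG φ g).IsFinite) :
    (deltaG φ g).weight ν f hν h = Idem.range (maxRep ν g) := by
  refine le_antisymm (weight_le_range ν f hν h (Set.mem_insert_of_mem _ rfl))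
    (le_inf (Finset.le_inf fun v hv => ?_) (Finset.le_inf fun e he => ?_))
  · rw [Set.Finite.mem_toFinset] at hv
    rcases hv with rfl | rfl
    · rw [maxRep_one, Idem.range_one]
      exact le_top
    · exact le_rfl
  · simp [deltaG] at he

lemma weight_edgeG (x : X) (h : (edgeG φ (1, x)).IsFinite) :
    (edgeG φ (1, x)).weight ν f hν h = edgeIdem ν f hν (1, x) := by
  refine le_antisymm (inf_le_right.trans (Finset.inf_le (by simp [edgeG])))
    (le_inf (Finset.le_inf fun v hv => ?_) (Finset.le_inf fun e he => ?_))
  · rw [Set.Finite.mem_toFinset] at hv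
    rcases hv with rfl | rfl
    · show _ ≤ Idem.range (maxRep ν 1)
      rw [maxRep_one, Idem.range_one]
      exact le_top
    · exact Idem.ofLE_le_range (maxRep_mul_nle_maxRep_mul (hν x).symm 1)
  · rw [(by simpa [edgeG] using he : e = (1, x))]

end Subgraph

end Weight

namespace FExp

variable {G : Type u} [Group G] {X : Type v} {F : Type w} [FInverseMonoid F]
  (ν : G →* GQuot F) (f : X → F) {φ : X → G} (hν : ∀ x : X, ν (φ x) = σclass (f x))

open Subgraph

noncomputable def lift (a : FExp φ) : F := (a.graph.weight ν f hν a.finite).val * maxRep ν a.elt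

lemma σclass_lift (a : FExp φ) : σclass (lift ν f hν a) = ν a.elt := by
  rw [lift, σclass_idem_mul, σclass_maxRep]

lemma lift_maxElt (g : G) : lift ν f hν (maxElt φ g) = maxRep ν g :=
  (congrArg (·.val * maxRep ν g) (weight_deltaG ν f hν g _)).trans
    (InverseMonoid.mul_inv_self_mul _)

lemma lift_one : lift ν f hν (1 : FExp φ) = 1 := (lift_maxElt ν f hν 1).trans (maxRep_one ν)

lemma lift_mxOp (a : FExp φ) : lift ν f hν (mxOp a) = mx (lift ν f hν a) :=
  (lift_maxElt ν f hν a.elt).trans (mx_idem_mul_maxRep ν _ a.elt).symm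

lemma lift_genElt (x : X) : lift ν f hν (genElt φ x) = f x := by
  have h := cellIdem_mul (hν x).symm 1
  rw [one_mul, maxRep_one, one_mul] at h
  exact (congrArg (·.val * maxRep ν (φ x)) (weight_edgeG ν f hν x _)).trans h

lemma lift_mul (a b : FExp φ) : lift ν f hν (a * b) = lift ν f hν a * lift ν f hν b := by
  set g := a.elt
  set g' := b.elt
  set Wa := a.graph.weight ν f hν a.finite
  set Wb := b.graph.weight ν f hν b.finite
  set Wgb := (g • b.graph).weight ν f hν (b.finite.smul g)
  have hWgb : Wgb ≤ Idem.range (maxRep ν g) ⊓ Idem.range (maxRep ν (g * g')) :=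
    le_inf (weight_le_range ν f hν _ ⟨1, b.one_mem, mul_one g⟩)
      (weight_le_range ν f hν _ ⟨g', b.elt_mem, rfl⟩)
  have hconj : Idem.conj (maxRep ν g) Wb = Wgb := by
    rw [conj_weight ν f hν g b.finite (b.finite.smul g),
      inf_eq_right.mpr (hWgb.trans inf_le_left)]
  have hrange : Wa ⊓ Wgb ≤ Idem.range (maxRep ν g * maxRep ν g') := by
    rw [range_maxRep_mul]
    exact inf_le_right.trans hWgb
  calc lift ν f hν (a * b) = (Wa ⊓ Wgb).val * maxRep ν (g * g') :=
        congrArg (·.val * maxRep ν (g * g')) (weight_union ν f hν a.finite _ (a * b).finite)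
  _ = (Wa ⊓ Wgb).val * (maxRep ν g * maxRep ν g') :=
        (Idem.mul_eq_mul_of_le_range (maxRep_mul_nle ν rfl) hrange).symm
  _ = Wa.val * ((Idem.conj (maxRep ν g) Wb).val * maxRep ν g) * maxRep ν g' := by
        rw [hconj, Idem.val_inf]
        simp only [mul_assoc]
  _ = lift ν f hν a * lift ν f hν b := by
        rw [← Idem.mul_eq_conj_mul]
        simp only [lift, mul_assoc]
        rfl

lemma lift_inv (a : FExp φ) : lift ν f hν a⁻¹ = (lift ν f hν a)⁻¹ := by
  set g := a.elt
  set W := a.graph.weight ν f hν a.finite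
  have hW :
      (g⁻¹ • a.graph).weight ν f hν (a.finite.smul g⁻¹) ≤ Idem.range (maxRep ν g⁻¹) :=
    weight_le_range ν f hν _ ⟨1, a.one_mem, mul_one _⟩
  calc lift ν f hν a⁻¹
      = ((g⁻¹ • a.graph).weight ν f hν (a.finite.smul g⁻¹)).val * maxRep ν g⁻¹ := rfl
  _ = (Idem.conj (maxRep ν g⁻¹) W).val * maxRep ν g⁻¹ := by
        rw [conj_weight ν f hν g⁻¹ a.finite (a.finite.smul g⁻¹), inf_eq_right.mpr hW]
  _ = (lift ν f hν a)⁻¹ := by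
        rw [← Idem.mul_eq_conj_mul, maxRep_inv, lift, InverseMonoid.mul_inv_rev,
          idem_inv W.idem]

end FExp

theorem statement13_general {G : Type u} [Group G] {X : Type v} (φ : X → G)
    {F : Type w} [FInverseMonoid F] (f : X → F)
    (ν : G →* GQuot F) (hν : ∀ x : X, ν (φ x) = σclass (f x)) :
    ∃ h : FExp φ → F,
      h 1 = 1 ∧
      (∀ a b : FExp φ, h (a * b) = h a * h b) ∧
      (∀ a : FExp φ, h a⁻¹ = (h a)⁻¹) ∧
      (∀ a : FExp φ, h (mxOp a) = mx (h a)) ∧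
      (∀ x : X, h (genElt φ x) = f x) ∧
      ∀ a : FExp φ, σclass (h a) = ν a.elt :=
  ⟨FExp.lift ν f hν, FExp.lift_one ν f hν, FExp.lift_mul ν f hν, FExp.lift_inv ν f hν,
    FExp.lift_mxOp ν f hν, FExp.lift_genElt ν f hν, FExp.σclass_lift ν f hν⟩

/-- Let `G` be an `X`-generated group and `F` an `X`-generated F-inverse
monoid admitting a canonical morphism `ν : G → F/σ` (`ν (x_G)` is the σ-class of `x_F`).
Then there is a canonical morphism `φ : F(G) → F` of F-inverse monoids (preserving `·`,
`⁻¹`, `m` and `1` and sending `(Γ_x, x_G)` to `x_F`) such that the square commutes: the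
σ-class of the image of `(Γ,g)` equals `ν g`. -/
theorem statement13 {G : Type u} [Group G] {X : Type v} (φ : X → G)
    (hG : Subgroup.closure (Set.range φ) = ⊤)
    {F : Type w} [FInverseMonoid F] (f : X → F)
    (hF : ∀ T : Set F, (∀ x : X, f x ∈ T) → (1 : F) ∈ T →
      (∀ a ∈ T, ∀ b ∈ T, a * b ∈ T) → (∀ a ∈ T, a⁻¹ ∈ T) → (∀ a ∈ T, mx a ∈ T) →
      ∀ s : F, s ∈ T)
    (ν : G →* GQuot F) (hν : ∀ x : X, ν (φ x) = σclass (f x)) :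
    ∃ h : FExp φ → F,
      h 1 = 1 ∧
      (∀ a b : FExp φ, h (a * b) = h a * h b) ∧
      (∀ a : FExp φ, h a⁻¹ = (h a)⁻¹) ∧
      (∀ a : FExp φ, h (mxOp a) = mx (h a)) ∧
      (∀ x : X, h (genElt φ x) = f x) ∧
      ∀ a : FExp φ, σclass (h a) = ν a.elt :=
  statement13_general φ f ν hν

end FInvPaper
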